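/- Let Θ(z,σ) = (Φ(z)^{2(α+1)} + 4(α+1)²Ψ(σ)²)^{1/(2(α+1))} be the anisotropic Minkowski gauge on ℝ^N = ℝ^m × ℝ^k, and define the anisotropic Legendre transformation Θ⁰ by Θ⁰(z,σ)^{α+1} = sup{ |⟨z,ξ⟩|^{α+1} + 4(α+1)²⟨σ,τ⟩ : (ξ,τ) ∈ ℝ^N, Θ(ξ,τ) = 1 }. Then for every (z,σ) ∈ ℝ^N one has Θ⁰(z,σ) = (Φ⁰(z)^{2(α+1)} + 4(α+1)²Ψ⁰(σ)²)^{1/(2(α+1))}. -/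

import Mathlib

open Real MeasureTheory
open scoped RealInnerProductSpace

noncomputable section

abbrev Euc (n : ℕ) := EuclideanSpace ℝ (Fin n)

/-- A Minkowski norm on `ℝⁿ`: nonnegative, absolutely homogeneous, with `N²` of class `C²`
away from the origin and strictly convex. -/
def IsMinkowskiNorm {n : ℕ} (N : Euc n → ℝ) : Prop :=
  (∀ x, 0 ≤ N x) ∧ (∀ (l : ℝ) (x : Euc n), N (l • x) = |l| * N x) ∧
  ContDiffOn ℝ 2 (fun x => (N x) ^ 2) {(0 : Euc n)}ᶜ ∧
  StrictConvexOn ℝ Set.univ (fun x => (N x) ^ 2)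

/-- The Legendre transform (dual norm) `N⁰(x) = sup { ⟨x,ξ⟩ : N(ξ) = 1 }`. -/
def dualNorm {n : ℕ} (N : Euc n → ℝ) (x : Euc n) : ℝ :=
  sSup ((fun ξ => ⟪x, ξ⟫) '' {ξ | N ξ = 1})

variable {m k : ℕ}

/-- The dual anisotropic Minkowski gauge
`ρ(z,σ) = (Φ⁰(z)^{2(α+1)} + 4(α+1)²Ψ⁰(σ)²)^{1/(2(α+1))}`. -/
def rho (α : ℝ) (Φ : Euc m → ℝ) (Ψ : Euc k → ℝ) (x : Euc m × Euc k) : ℝ :=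
  (dualNorm Φ x.1 ^ (2 * (α + 1)) + 4 * (α + 1) ^ 2 * dualNorm Ψ x.2 ^ 2) ^ (1 / (2 * (α + 1)))

/-- Gradient in the `z` variables. -/
def gradZ (u : Euc m × Euc k → ℝ) (x : Euc m × Euc k) : Euc m :=
  gradient (fun z => u (z, x.2)) x.1

/-- Gradient in the `σ` variables. -/
def gradS (u : Euc m × Euc k → ℝ) (x : Euc m × Euc k) : Euc k :=
  gradient (fun σ => u (x.1, σ)) x.2

/-- Divergence in the `z` variables. -/
def divZ (V : Euc m × Euc k → Euc m) (x : Euc m × Euc k) : ℝ :=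
  ∑ i, fderiv ℝ (fun z => V (z, x.2) i) x.1 (EuclideanSpace.single i 1)

/-- Divergence in the `σ` variables. -/
def divS (V : Euc m × Euc k → Euc k) (x : Euc m × Euc k) : ℝ :=
  ∑ i, fderiv ℝ (fun σ => V (x.1, σ) i) x.2 (EuclideanSpace.single i 1)

/-- The Finsler Laplacian in the `z` variables, `Δ_Φ(u) = div_z(Φ(∇_z u) ∇Φ(∇_z u))`. -/
def finslerLapZ (Φ : Euc m → ℝ) (u : Euc m × Euc k → ℝ) (x : Euc m × Euc k) : ℝ :=
  divZ (fun y => Φ (gradZ u y) • gradient Φ (gradZ u y)) x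

/-- The Finsler Laplacian in the `σ` variables, `Δ_Ψ(u) = div_σ(Ψ(∇_σ u) ∇Ψ(∇_σ u))`. -/
def finslerLapS (Ψ : Euc k → ℝ) (u : Euc m × Euc k → ℝ) (x : Euc m × Euc k) : ℝ :=
  divS (fun y => Ψ (gradS u y) • gradient Ψ (gradS u y)) x

/-- The operator `𝓛_{α,p}`. -/
def Lop (α p : ℝ) (Φ : Euc m → ℝ) (Ψ : Euc k → ℝ) (u : Euc m × Euc k → ℝ)
    (x : Euc m × Euc k) : ℝ :=
  divZ (fun y =>
      (Φ (gradZ u y) ^ 2 + dualNorm Φ y.1 ^ (2 * α) / 4 * Ψ (gradS u y) ^ 2) ^ ((p - 2) / 2) •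
        (Φ (gradZ u y) • gradient Φ (gradZ u y))) x
  + divS (fun y =>
      (Φ (gradZ u y) ^ 2 + dualNorm Φ y.1 ^ (2 * α) / 4 * Ψ (gradS u y) ^ 2) ^ ((p - 2) / 2) •
        ((dualNorm Φ y.1 ^ (2 * α) / 4 * Ψ (gradS u y)) • gradient Ψ (gradS u y))) x

/-- The operator `𝓛_{α,2}(u) = Δ_Φ(u) + (Φ⁰(z)^{2α}/4) Δ_Ψ(u)`. -/
def Lop2 (α : ℝ) (Φ : Euc m → ℝ) (Ψ : Euc k → ℝ) (u : Euc m × Euc k → ℝ)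
    (x : Euc m × Euc k) : ℝ :=
  finslerLapZ Φ u x + dualNorm Φ x.1 ^ (2 * α) / 4 * finslerLapS Ψ u x

/-!
Write `A = Φ⁰(z)`, `B = Ψ⁰(σ)` and `β = α + 1`. The constraint `Θ(ξ,τ) = 1` says exactly that
`(s, t) = (Φ(ξ)^β, 2βΨ(τ))` lies on the unit circle, and the duality inequalities bound the quantity
to be maximised by `A^β s + 2βB t`. By Cauchy–Schwarz in `ℝ²` this is at most
`√(A^{2β} + 4β²B²)`, and the bound is attained by rescaling maximisers `a` of `⟪z, ·⟫` on `{Φ = 1}`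
and `b` of `⟪σ, ·⟫` on `{Ψ = 1}` so that `(s, t)` points in the direction of `(A^β, 2βB)`.
-/

namespace IsMinkowskiNorm

variable {n : ℕ} {N : Euc n → ℝ}

lemma nonneg (hN : IsMinkowskiNorm N) (x : Euc n) : 0 ≤ N x := hN.1 x

lemma map_smul (hN : IsMinkowskiNorm N) (l : ℝ) (x : Euc n) : N (l • x) = |l| * N x := hN.2.1 l x

lemma map_zero (hN : IsMinkowskiNorm N) : N 0 = 0 := by
  simpa using hN.map_smul 0 0

lemma map_neg (hN : IsMinkowskiNorm N) (x : Euc n) : N (-x) = N x := by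
  simpa using hN.map_smul (-1) x

lemma pos (hN : IsMinkowskiNorm N) {x : Euc n} (hx : x ≠ 0) : 0 < N x := by
  refine (hN.nonneg x).lt_of_ne fun hx0 => ?_
  -- strict convexity of `N²` on the segment from `x` to `0` would give `N (x / 2) ^ 2 < 0`
  have hconv := hN.2.2.2.2 (Set.mem_univ x) (Set.mem_univ 0) hx
    (by norm_num : (0 : ℝ) < 1 / 2) (by norm_num : (0 : ℝ) < 1 / 2) (by norm_num)
  simp only [smul_zero, add_zero, smul_eq_mul, ← hx0, hN.map_zero] at hconv
  nlinarith

lemma map_inv_smul_self (hN : IsMinkowskiNorm N) {x : Euc n} (hx : x ≠ 0) :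
    N ((N x)⁻¹ • x) = 1 := by
  rw [hN.map_smul, abs_of_pos (inv_pos.mpr (hN.pos hx)), inv_mul_cancel₀ (hN.pos hx).ne']

lemma continuousOn (hN : IsMinkowskiNorm N) : ContinuousOn N {0}ᶜ :=
  (Real.continuous_sqrt.comp_continuousOn hN.2.2.1.continuousOn).congr fun x _ =>
    (Real.sqrt_sq (hN.nonneg x)).symm

lemma unitSet_eq_image_sphere (hN : IsMinkowskiNorm N) :
    {ξ | N ξ = 1} = (fun u => (N u)⁻¹ • u) '' Metric.sphere 0 1 := by
  ext ξ
  constructor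
  · intro (hξ : N ξ = 1)
    have hξ0 : ξ ≠ 0 := by rintro rfl; simp [hN.map_zero] at hξ
    have hnorm : 0 < ‖ξ‖ := norm_pos_iff.mpr hξ0
    refine ⟨‖ξ‖⁻¹ • ξ, by simp [norm_smul, hnorm.ne'], ?_⟩
    dsimp only
    rw [hN.map_smul, hξ, abs_of_pos (inv_pos.mpr hnorm), mul_one, inv_inv, smul_smul,
      mul_inv_cancel₀ hnorm.ne', one_smul]
  · rintro ⟨u, hu, rfl⟩
    exact hN.map_inv_smul_self (ne_zero_of_mem_unit_sphere ⟨u, hu⟩)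

lemma isCompact_unitSet (hN : IsMinkowskiNorm N) : IsCompact {ξ | N ξ = 1} := by
  rw [hN.unitSet_eq_image_sphere]
  have hsub : Metric.sphere (0 : Euc n) 1 ⊆ {0}ᶜ := fun u hu => ne_zero_of_mem_unit_sphere ⟨u, hu⟩
  exact (isCompact_sphere 0 1).image_of_continuousOn
    (((hN.continuousOn.mono hsub).inv₀ fun u hu => (hN.pos (hsub hu)).ne').smul continuousOn_id)

lemma unitSet_nonempty [Nontrivial (Euc n)] (hN : IsMinkowskiNorm N) :
    {ξ | N ξ = 1}.Nonempty := by
  rw [hN.unitSet_eq_image_sphere]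
  exact (NormedSpace.sphere_nonempty.mpr zero_le_one).image _

lemma isCompact_image_inner (hN : IsMinkowskiNorm N) (z : Euc n) :
    IsCompact ((fun ξ => ⟪z, ξ⟫) '' {ξ | N ξ = 1}) :=
  hN.isCompact_unitSet.image (continuous_const.inner continuous_id)

lemma exists_dualNorm_eq_inner [Nontrivial (Euc n)] (hN : IsMinkowskiNorm N) (z : Euc n) :
    ∃ a, N a = 1 ∧ dualNorm N z = ⟪z, a⟫ := by
  obtain ⟨a, ha, hmax⟩ :=
    (hN.isCompact_image_inner z).sSup_mem (hN.unitSet_nonempty.image _)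
  exact ⟨a, ha, hmax.symm⟩

lemma inner_le_dualNorm_mul (hN : IsMinkowskiNorm N) (z ξ : Euc n) :
    ⟪z, ξ⟫ ≤ dualNorm N z * N ξ := by
  rcases eq_or_ne ξ 0 with rfl | hξ
  · simp [hN.map_zero]
  have hunit : ⟪z, (N ξ)⁻¹ • ξ⟫ ≤ dualNorm N z :=
    le_csSup (hN.isCompact_image_inner z).bddAbove ⟨_, hN.map_inv_smul_self hξ, rfl⟩
  rw [real_inner_smul_right, inv_mul_le_iff₀ (hN.pos hξ)] at hunit
  linarith

lemma abs_inner_le_dualNorm_mul (hN : IsMinkowskiNorm N) (z ξ : Euc n) :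
    |⟪z, ξ⟫| ≤ dualNorm N z * N ξ := by
  refine abs_le.mpr ⟨?_, hN.inner_le_dualNorm_mul z ξ⟩
  have := hN.inner_le_dualNorm_mul z (-ξ)
  rw [inner_neg_right, hN.map_neg] at this
  linarith

lemma dualNorm_nonneg [Nontrivial (Euc n)] (hN : IsMinkowskiNorm N) (z : Euc n) :
    0 ≤ dualNorm N z := by
  obtain ⟨a, ha, -⟩ := hN.exists_dualNorm_eq_inner z
  simpa [ha] using (abs_nonneg _).trans (hN.abs_inner_le_dualNorm_mul z a)

end IsMinkowskiNorm

lemma rpow_sq_eq_rpow_two_mul {x : ℝ} (hx : 0 ≤ x) (y : ℝ) : (x ^ y) ^ 2 = x ^ (2 * y) := by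
  rw [← Real.rpow_mul_natCast hx, mul_comm]
  norm_num

lemma rpow_add_sq_rpow_eq_one_iff {β u v : ℝ} (hβ : 0 < β) (hu : 0 ≤ u) :
    (u ^ (2 * β) + 4 * β ^ 2 * v ^ 2) ^ (1 / (2 * β)) = 1 ↔
      (u ^ β) ^ 2 + (2 * β * v) ^ 2 = 1 := by
  have hbase : 0 ≤ u ^ (2 * β) + 4 * β ^ 2 * v ^ 2 := by
    have := Real.rpow_nonneg hu (2 * β)
    positivity
  rw [one_div, Real.rpow_inv_eq hbase zero_le_one (by positivity), Real.one_rpow,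
    rpow_sq_eq_rpow_two_mul hu, mul_pow]
  ring_nf

lemma eq_rpow_of_rpow_eq_sqrt {w y β : ℝ} (hw : 0 ≤ w) (hy : 0 ≤ y) (hβ : 0 < β)
    (h : w ^ β = √y) : w = y ^ (1 / (2 * β)) := by
  rw [← Real.rpow_rpow_inv hw hβ.ne', h, Real.sqrt_eq_rpow, ← Real.rpow_mul hy]
  ring_nf

lemma mul_add_mul_le_sqrt {p q s t : ℝ} (hst : s ^ 2 + t ^ 2 = 1) :
    p * s + q * t ≤ √(p ^ 2 + q ^ 2) :=
  (le_abs_self _).trans <| Real.abs_le_sqrt <| by nlinarith [sq_nonneg (p * t - q * s)]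

lemma exists_mul_add_mul_eq_sqrt {p q : ℝ} (hp : 0 ≤ p) (hq : 0 ≤ q) :
    ∃ s t : ℝ, 0 ≤ s ∧ 0 ≤ t ∧ s ^ 2 + t ^ 2 = 1 ∧ p * s + q * t = √(p ^ 2 + q ^ 2) := by
  rcases (Real.sqrt_nonneg (p ^ 2 + q ^ 2)).eq_or_lt with hR | hR
  · have hp0 : p = 0 := by
      nlinarith [Real.sqrt_eq_zero'.mp hR.symm, sq_nonneg q]
    exact ⟨1, 0, zero_le_one, le_rfl, by norm_num, by rw [← hR, hp0]; ring⟩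
  · set R := √(p ^ 2 + q ^ 2)
    have hR2 : R ^ 2 = p ^ 2 + q ^ 2 := Real.sq_sqrt (by positivity)
    refine ⟨p / R, q / R, by positivity, by positivity, ?_, ?_⟩
    · rw [div_pow, div_pow, ← add_div, ← hR2, div_self (by positivity)]
    · field_simp
      exact hR2.symm

/-- The gauge `Θ`, written with `β = α + 1`. -/
def anisoGauge (β : ℝ) (Φ : Euc m → ℝ) (Ψ : Euc k → ℝ) (x : Euc m × Euc k) : ℝ :=
  (Φ x.1 ^ (2 * β) + 4 * β ^ 2 * Ψ x.2 ^ 2) ^ (1 / (2 * β))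

section Legendre

variable {β : ℝ} {Φ : Euc m → ℝ} {Ψ : Euc k → ℝ}

lemma anisoGauge_eq_one_iff (hβ : 0 < β) (hΦ : IsMinkowskiNorm Φ) (x : Euc m × Euc k) :
    anisoGauge β Φ Ψ x = 1 ↔ (Φ x.1 ^ β) ^ 2 + (2 * β * Ψ x.2) ^ 2 = 1 :=
  rpow_add_sq_rpow_eq_one_iff hβ (hΦ.nonneg _)

lemma legendre_value_le [Nontrivial (Euc m)] (hβ : 0 < β) (hΦ : IsMinkowskiNorm Φ)
    (hΨ : IsMinkowskiNorm Ψ) (z : Euc m) (σ : Euc k) {ξ : Euc m} {τ : Euc k}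
    (h : anisoGauge β Φ Ψ (ξ, τ) = 1) :
    |⟪z, ξ⟫| ^ β + 4 * β ^ 2 * ⟪σ, τ⟫ ≤
      √((dualNorm Φ z ^ β) ^ 2 + (2 * β * dualNorm Ψ σ) ^ 2) := by
  have hz : |⟪z, ξ⟫| ^ β ≤ dualNorm Φ z ^ β * Φ ξ ^ β := by
    rw [← Real.mul_rpow (hΦ.dualNorm_nonneg z) (hΦ.nonneg ξ)]
    exact Real.rpow_le_rpow (abs_nonneg _) (hΦ.abs_inner_le_dualNorm_mul z ξ) hβ.le
  have hσ : 4 * β ^ 2 * ⟪σ, τ⟫ ≤ 2 * β * dualNorm Ψ σ * (2 * β * Ψ τ) := by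
    nlinarith [hΨ.inner_le_dualNorm_mul σ τ, sq_nonneg β]
  linarith [mul_add_mul_le_sqrt (p := dualNorm Φ z ^ β) (q := 2 * β * dualNorm Ψ σ)
    ((anisoGauge_eq_one_iff hβ hΦ _).mp h)]

lemma exists_legendre_value_eq [Nontrivial (Euc m)] [Nontrivial (Euc k)] (hβ : 0 < β)
    (hΦ : IsMinkowskiNorm Φ) (hΨ : IsMinkowskiNorm Ψ) (z : Euc m) (σ : Euc k) {s t : ℝ}
    (hs : 0 ≤ s) (ht : 0 ≤ t) (hst : s ^ 2 + t ^ 2 = 1) :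
    ∃ ξ τ, anisoGauge β Φ Ψ (ξ, τ) = 1 ∧
      |⟪z, ξ⟫| ^ β + 4 * β ^ 2 * ⟪σ, τ⟫ = dualNorm Φ z ^ β * s + 2 * β * dualNorm Ψ σ * t := by
  obtain ⟨a, ha, hza⟩ := hΦ.exists_dualNorm_eq_inner z
  obtain ⟨b, hb, hσb⟩ := hΨ.exists_dualNorm_eq_inner σ
  have hc : 0 ≤ s ^ β⁻¹ := Real.rpow_nonneg hs _
  have hcβ : (s ^ β⁻¹) ^ β = s := Real.rpow_inv_rpow hs hβ.ne'
  refine ⟨s ^ β⁻¹ • a, (t / (2 * β)) • b, (anisoGauge_eq_one_iff hβ hΦ _).mpr ?_, ?_⟩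
  · dsimp only
    rw [hΦ.map_smul, hΨ.map_smul, ha, hb, mul_one, mul_one, abs_of_nonneg hc,
      abs_of_nonneg (by positivity), hcβ, mul_div_cancel₀ _ (by positivity)]
    exact hst
  · rw [real_inner_smul_right, real_inner_smul_right, ← hza, ← hσb,
      abs_of_nonneg (mul_nonneg hc (hΦ.dualNorm_nonneg z)),
      Real.mul_rpow hc (hΦ.dualNorm_nonneg z), hcβ]
    field_simp
    ring

theorem isGreatest_legendre_set [Nontrivial (Euc m)] [Nontrivial (Euc k)] (hβ : 0 < β)
    (hΦ : IsMinkowskiNorm Φ) (hΨ : IsMinkowskiNorm Ψ) (z : Euc m) (σ : Euc k) :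
    IsGreatest {r | ∃ ξ τ, anisoGauge β Φ Ψ (ξ, τ) = 1 ∧
        r = |⟪z, ξ⟫| ^ β + 4 * β ^ 2 * ⟪σ, τ⟫}
      (√((dualNorm Φ z ^ β) ^ 2 + (2 * β * dualNorm Ψ σ) ^ 2)) := by
  refine ⟨?_, ?_⟩
  · have hB := hΨ.dualNorm_nonneg σ
    obtain ⟨s, t, hs, ht, hst, hmax⟩ := exists_mul_add_mul_eq_sqrt (q := 2 * β * dualNorm Ψ σ)
      (Real.rpow_nonneg (hΦ.dualNorm_nonneg z) β) (by positivity)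
    obtain ⟨ξ, τ, hξτ, hval⟩ := exists_legendre_value_eq hβ hΦ hΨ z σ hs ht hst
    exact ⟨ξ, τ, hξτ, hmax.symm.trans hval.symm⟩
  · rintro r ⟨ξ, τ, hξτ, rfl⟩
    exact legendre_value_le hβ hΦ hΨ z σ hξτ

end Legendre

/-- The anisotropic Legendre transform `Θ⁰` of the anisotropic Minkowski gauge
`Θ(z,σ) = (Φ(z)^{2(α+1)} + 4(α+1)²Ψ(σ)²)^{1/(2(α+1))}`, defined by
`Θ⁰(z,σ)^{α+1} = sup { |⟨z,ξ⟩|^{α+1} + 4(α+1)²⟨σ,τ⟩ : Θ(ξ,τ) = 1 }`, coincides with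
`(Φ⁰(z)^{2(α+1)} + 4(α+1)²Ψ⁰(σ)²)^{1/(2(α+1))}`. -/
theorem anisotropic_legendre_formula (m k : ℕ) (hm : 1 ≤ m) (hk : 1 ≤ k)
    (α : ℝ) (hα : 0 < α)
    (Φ : Euc m → ℝ) (Ψ : Euc k → ℝ)
    (hΦ : IsMinkowskiNorm Φ) (hΨ : IsMinkowskiNorm Ψ)
    (Θ : Euc m × Euc k → ℝ)
    (hΘ : ∀ x : Euc m × Euc k,
      Θ x = (Φ x.1 ^ (2 * (α + 1)) + 4 * (α + 1) ^ 2 * Ψ x.2 ^ 2) ^ (1 / (2 * (α + 1))))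
    (Θ0 : Euc m × Euc k → ℝ)
    (hΘ0nonneg : ∀ x, 0 ≤ Θ0 x)
    (hΘ0 : ∀ x : Euc m × Euc k,
      Θ0 x ^ (α + 1) = sSup {r : ℝ | ∃ ξ : Euc m, ∃ τ : Euc k, Θ (ξ, τ) = 1 ∧
        r = |⟪x.1, ξ⟫| ^ (α + 1) + 4 * (α + 1) ^ 2 * ⟪x.2, τ⟫}) :
    ∀ x : Euc m × Euc k,
      Θ0 x = (dualNorm Φ x.1 ^ (2 * (α + 1)) +
        4 * (α + 1) ^ 2 * dualNorm Ψ x.2 ^ 2) ^ (1 / (2 * (α + 1))) := by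
  intro x
  have : Nonempty (Fin m) := ⟨⟨0, hm⟩⟩
  have : Nonempty (Fin k) := ⟨⟨0, hk⟩⟩
  obtain rfl : Θ = anisoGauge (α + 1) Φ Ψ := funext hΘ
  have hβ : 0 < α + 1 := by linarith
  have hA := hΦ.dualNorm_nonneg x.1
  have hsup := (isGreatest_legendre_set hβ hΦ hΨ x.1 x.2).csSup_eq
  rw [← hΘ0 x, rpow_sq_eq_rpow_two_mul hA, mul_pow] at hsup
  refine eq_rpow_of_rpow_eq_sqrt (hΘ0nonneg x) ?_ hβ (by rw [hsup]; ring_nf)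
  have := Real.rpow_nonneg hA (2 * (α + 1))
  positivity
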